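/- Let ℓ be an odd prime, let m ∈ F_ℓˣ be a nonsquare, and let γ ∈ GSp₄(F_ℓ) be a cyclic element with characteristic polynomial (T²−m)² and multiplier m(γ) = m. Then the centralizer of γ in GSp₄(F_ℓ) has order 2ℓ²(ℓ−1). -/

import Mathlib

open Matrix Polynomial

noncomputable section

/-- The standard symplectic form matrix `J = [[0, I₂], [−I₂, 0]]`. -/
def J4 (k : Type*) [CommRing k] : Matrix (Fin 4) (Fin 4) k :=
  !![0,0,1,0; 0,0,0,1; -1,0,0,0; 0,-1,0,0]

/-- `γ` is a symplectic similitude with multiplier `m`. -/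
def InGSp4 {k : Type*} [CommRing k] (m : k) (γ : Matrix (Fin 4) (Fin 4) k) : Prop :=
  IsUnit γ ∧ IsUnit m ∧ γ.transpose * J4 k * γ = m • J4 k

/-- The order of the centralizer of `γ` in `GSp₄`. -/
def centOrder {k : Type*} [CommRing k] (γ : Matrix (Fin 4) (Fin 4) k) : ℕ :=
  Nat.card {δ : Matrix (Fin 4) (Fin 4) k // (∃ m, InGSp4 m δ) ∧ δ * γ = γ * δ}

/-- `γ` is cyclic: its minimal polynomial equals its characteristic polynomial. -/
def IsCyclicMat {k : Type*} [Field k] (γ : Matrix (Fin 4) (Fin 4) k) : Prop :=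
  minpoly k γ = γ.charpoly

/-!
Write `N = γ² - m`. Cayley–Hamilton gives `N² = 0`, so `T ↦ γ` defines a map
`embed : k[T]/(T² - m)² → M₄(k)`, and cyclicity gives `N ≠ 0`. For any `v` with `N v ≠ 0`, the
vectors `v, γ v, N v, γ N v` form a basis: on `ker N` we have `γ² = m`, so `a + b γ` is injective
there unless `a = b = 0` (`m` is a nonsquare). A matrix commuting with `γ` is therefore determined
by its value at the cyclic vector `v`, and the centralizer of `γ` is exactly the set of
`a + b γ + c N + d γ N`, with unique coefficients.

The symplectic adjoint `δ ↦ J⁻¹ δᵀ J` sends `γ` to `m γ⁻¹ = γ - m⁻¹ γ N` and `N` to `-N`, and a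
short computation gives `δ^* δ = (a² + m b²) + 2ab γ - m⁻¹ ab γ N` for `δ = a + b γ + c N + d γ N`.
So `δ` is a similitude iff `ab = 0` and `(a, b) ≠ 0`: there are `2 (ℓ - 1)` choices for `(a, b)`
and `ℓ²` for `(c, d)`.
-/

section SymplecticAdjoint

variable {R : Type*} [CommRing R]

lemma J4_mul_J4 : J4 R * J4 R = -1 := by
  ext i j
  fin_cases i <;> fin_cases j <;> simp [J4, Matrix.mul_apply, Fin.sum_univ_four]

def symplecticAdjoint : Matrix (Fin 4) (Fin 4) R →ₗ[R] Matrix (Fin 4) (Fin 4) R where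
  toFun x := -(J4 R * xᵀ * J4 R)
  map_add' x y := by simp [Matrix.mul_add, Matrix.add_mul, add_comm]
  map_smul' a x := by simp

lemma symplecticAdjoint_apply (x : Matrix (Fin 4) (Fin 4) R) :
    symplecticAdjoint x = -(J4 R * xᵀ * J4 R) := rfl

lemma symplecticAdjoint_mul (x y : Matrix (Fin 4) (Fin 4) R) :
    symplecticAdjoint (x * y) = symplecticAdjoint y * symplecticAdjoint x := by
  simp only [symplecticAdjoint_apply, transpose_mul, Matrix.neg_mul, Matrix.mul_neg, neg_neg,
    Matrix.mul_assoc]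
  rw [← Matrix.mul_assoc (J4 R) (J4 R), J4_mul_J4]
  simp

lemma symplecticAdjoint_one : symplecticAdjoint (1 : Matrix (Fin 4) (Fin 4) R) = 1 := by
  simp [symplecticAdjoint_apply, J4_mul_J4]

lemma transpose_mul_J4_mul_eq_smul_iff (x : Matrix (Fin 4) (Fin 4) R) (μ : R) :
    xᵀ * J4 R * x = μ • J4 R ↔ symplecticAdjoint x * x = μ • 1 := by
  have h : symplecticAdjoint x * x = -(J4 R * (xᵀ * J4 R * x)) := by
    simp [symplecticAdjoint_apply, Matrix.mul_assoc]
  rw [h, neg_eq_iff_eq_neg]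
  constructor
  · intro hx
    rw [hx, Matrix.mul_smul, J4_mul_J4]
    simp
  · intro hx
    simpa [← Matrix.mul_assoc, J4_mul_J4] using congrArg (J4 R * ·) hx

end SymplecticAdjoint

lemma exists_inGSp4_iff {k : Type*} [Field k] (δ : Matrix (Fin 4) (Fin 4) k) :
    (∃ μ, InGSp4 μ δ) ↔ ∃ μ : k, μ ≠ 0 ∧ symplecticAdjoint δ * δ = μ • 1 := by
  simp only [InGSp4, transpose_mul_J4_mul_eq_smul_iff, isUnit_iff_ne_zero]
  constructor
  · rintro ⟨μ, -, hμ, h⟩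
    exact ⟨μ, hμ, h⟩
  · rintro ⟨μ, hμ, h⟩
    refine ⟨μ, IsUnit.of_mul_eq_one_right (μ⁻¹ • symplecticAdjoint δ) ?_, hμ, h⟩
    rw [smul_mul_assoc, h, smul_smul, inv_mul_cancel₀ hμ, one_smul]

namespace GSp4Centralizer

variable {k : Type*} [Field k] (m : k)

abbrev Alg := AdjoinRoot ((X ^ 2 - C m) ^ 2 : k[X])

local notation "t" => AdjoinRoot.root ((X ^ 2 - C m) ^ 2 : k[X])
local notation "↑ₐ" => algebraMap k (Alg m)

def nilp : Alg m := t ^ 2 - ↑ₐ m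

def ofCoeffs (a b c d : k) : Alg m := a • 1 + b • t + c • nilp m + d • (t * nilp m)

/-- `m T⁻¹`, the element the symplectic adjoint sends `T` to. -/
def adjRoot : Alg m := t - ↑ₐ m⁻¹ * t * nilp m

lemma root_sq : t ^ 2 = ↑ₐ m + nilp m := by
  rw [nilp]
  ring

lemma nilp_sq : nilp m ^ 2 = 0 := by
  have h := AdjoinRoot.mk_self (f := ((X ^ 2 - C m) ^ 2 : k[X]))
  rwa [map_pow, map_sub, map_pow, AdjoinRoot.mk_X, AdjoinRoot.mk_C,
    ← AdjoinRoot.algebraMap_eq] at h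

lemma nilp_mul_ofCoeffs (a b c d : k) : nilp m * ofCoeffs m a b c d = (a • 1 + b • t) * nilp m := by
  simp only [ofCoeffs, Algebra.smul_def, mul_one]
  linear_combination (↑ₐ c + ↑ₐ d * t) * nilp_sq m

lemma ofCoeffs_zero_zero (c d : k) : ofCoeffs m 0 0 c d = (c • 1 + d • t) * nilp m := by
  simp only [ofCoeffs, zero_smul, zero_add, add_mul, smul_mul_assoc, one_mul]

lemma one_sub_root_mul_one_add_root (a b : k) :
    (a • 1 - b • t) * (a • 1 + b • t) = (a ^ 2 - m * b ^ 2) • 1 - b ^ 2 • nilp m := by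
  simp only [Algebra.smul_def, mul_one, map_sub, map_mul, map_pow]
  linear_combination (-↑ₐ b ^ 2) * root_sq m

lemma ofCoeffs_sub_ofCoeffs (a b c d a' b' c' d' : k) :
    ofCoeffs m a b c d - ofCoeffs m a' b' c' d'
      = ofCoeffs m (a - a') (b - b') (c - c') (d - d') := by
  simp only [ofCoeffs, sub_smul]
  abel

variable {m}

lemma algebraMap_inv_mul (hm : m ≠ 0) : ↑ₐ m⁻¹ * ↑ₐ m = 1 := by
  rw [← map_mul, inv_mul_cancel₀ hm, map_one]

lemma adjRoot_mul_root (hm : m ≠ 0) : adjRoot m * t = ↑ₐ m := by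
  rw [adjRoot]
  linear_combination (1 - ↑ₐ m⁻¹ * nilp m) * root_sq m - nilp m * algebraMap_inv_mul hm
    - ↑ₐ m⁻¹ * nilp_sq m

lemma adjRoot_sq (hm : m ≠ 0) : adjRoot m ^ 2 - ↑ₐ m = -nilp m := by
  rw [adjRoot]
  linear_combination (1 - ↑ₐ m⁻¹ * nilp m) ^ 2 * root_sq m - 2 * nilp m * algebraMap_inv_mul hm
    + (-2 * ↑ₐ m⁻¹ + (↑ₐ m + nilp m) * ↑ₐ m⁻¹ ^ 2) * nilp_sq m

lemma nilp_mul_adjRoot : nilp m * adjRoot m = t * nilp m := by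
  rw [adjRoot]
  linear_combination (-↑ₐ m⁻¹ * t) * nilp_sq m

lemma adjoint_ofCoeffs_mul_ofCoeffs (hm : m ≠ 0) (a b c d : k) :
    (a • 1 + b • adjRoot m - c • nilp m - d • (t * nilp m)) * ofCoeffs m a b c d
      = ofCoeffs m (a ^ 2 + m * b ^ 2) (2 * a * b) 0 (-(a * b * m⁻¹)) := by
  simp only [ofCoeffs, adjRoot, Algebra.smul_def, mul_one, map_add, map_mul, map_pow, map_neg,
    map_ofNat, map_zero]
  linear_combination (-(↑ₐ b * ↑ₐ m⁻¹ * t + ↑ₐ c + ↑ₐ d * t) * (↑ₐ c + ↑ₐ d * t)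
      - ↑ₐ b ^ 2 * ↑ₐ m⁻¹) * nilp_sq m
    + (↑ₐ b ^ 2 - ↑ₐ b ^ 2 * ↑ₐ m⁻¹ * nilp m) * root_sq m
    - ↑ₐ b ^ 2 * nilp m * algebraMap_inv_mul hm

variable {γ : Matrix (Fin 4) (Fin 4) k} (hq : aeval γ ((X ^ 2 - C m) ^ 2) = 0)

def embed : Alg m →ₐ[k] Matrix (Fin 4) (Fin 4) k :=
  Ideal.Quotient.liftₐ _ (aeval γ) fun p hp => by
    obtain ⟨r, rfl⟩ := Ideal.mem_span_singleton'.mp hp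
    rw [map_mul, hq, mul_zero]

lemma embed_mk (p : k[X]) : embed hq (AdjoinRoot.mk _ p) = aeval γ p := rfl

lemma embed_root : embed hq t = γ := by
  rw [← AdjoinRoot.mk_X, embed_mk, aeval_X]

lemma embed_nilp : embed hq (nilp m) = aeval γ (X ^ 2 - C m) := by
  rw [← embed_mk hq]
  simp [nilp, AdjoinRoot.algebraMap_eq]

lemma embed_mul_comm (r : Alg m) : embed hq r * γ = γ * embed hq r := by
  have h := congrArg (embed hq) (mul_comm r t)
  rwa [map_mul, map_mul, embed_root] at h

lemma commute_embed {D : Matrix (Fin 4) (Fin 4) k} (hD : Commute D γ) (r : Alg m) :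
    Commute D (embed hq r) := by
  induction r using AdjoinRoot.induction_on with
  | ih p =>
    have hγ : γ ∈ Subalgebra.centralizer k {D} := by
      simpa [Subalgebra.mem_centralizer_iff] using hD.eq
    have hp := Algebra.adjoin_le (Set.singleton_subset_iff.mpr hγ)
      (aeval_mem_adjoin_singleton k γ (p := p))
    rw [embed_mk]
    exact (Subalgebra.mem_centralizer_iff k).mp hp D rfl

lemma embed_mul_mulVec (r s : Alg m) (u : Fin 4 → k) :
    embed hq (r * s) *ᵥ u = embed hq r *ᵥ (embed hq s *ᵥ u) := by
  rw [map_mul, mulVec_mulVec]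

lemma embed_ofCoeffs_mulVec (v : Fin 4 → k) (a b c d : k) :
    embed hq (ofCoeffs m a b c d) *ᵥ v
      = ∑ i, ![a, b, c, d] i • (embed hq (![1, t, nilp m, t * nilp m] i) *ᵥ v) := by
  simp [ofCoeffs, Fin.sum_univ_four, add_mulVec, smul_mulVec]

lemma symplecticAdjoint_embed_algebraMap (a : k) :
    symplecticAdjoint (embed hq (↑ₐ a)) = embed hq (↑ₐ a) := by
  rw [AlgHom.commutes, Algebra.algebraMap_eq_smul_one, map_smul, symplecticAdjoint_one]

section Similitude

variable {hq} (hγ : InGSp4 m γ)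
include hγ

lemma symplecticAdjoint_embed_root : symplecticAdjoint (embed hq t) = embed hq (adjRoot m) := by
  have hτ : symplecticAdjoint γ * γ = m • 1 := (transpose_mul_J4_mul_eq_smul_iff γ m).mp hγ.2.2
  have hadj := congrArg (embed hq) (adjRoot_mul_root hγ.2.1.ne_zero)
  rw [map_mul, embed_root, AlgHom.commutes, Algebra.algebraMap_eq_smul_one] at hadj
  rw [embed_root]
  exact hγ.1.mul_left_inj.mp (hτ.trans hadj.symm)

lemma symplecticAdjoint_embed_nilp :
    symplecticAdjoint (embed hq (nilp m)) = embed hq (-nilp m) := by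
  have hsq (r : Alg m) : embed hq (r ^ 2) = embed hq r * embed hq r := by
    rw [map_pow, pow_two]
  rw [← adjRoot_sq hγ.2.1.ne_zero, nilp, map_sub, map_sub, map_sub, hsq, hsq,
    symplecticAdjoint_mul, symplecticAdjoint_embed_root hγ, symplecticAdjoint_embed_algebraMap]

lemma symplecticAdjoint_embed_root_mul_nilp :
    symplecticAdjoint (embed hq (t * nilp m)) = embed hq (-(t * nilp m)) := by
  rw [map_mul, symplecticAdjoint_mul, symplecticAdjoint_embed_nilp hγ,
    symplecticAdjoint_embed_root hγ, ← map_mul, neg_mul, nilp_mul_adjRoot]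

lemma symplecticAdjoint_embed_ofCoeffs_mul_self (a b c d : k) :
    symplecticAdjoint (embed hq (ofCoeffs m a b c d)) * embed hq (ofCoeffs m a b c d)
      = embed hq (ofCoeffs m (a ^ 2 + m * b ^ 2) (2 * a * b) 0 (-(a * b * m⁻¹))) := by
  have hadj : symplecticAdjoint (embed hq (ofCoeffs m a b c d))
      = embed hq (a • 1 + b • adjRoot m - c • nilp m - d • (t * nilp m)) := by
    simp only [ofCoeffs, map_add, map_smul, map_one, map_neg, symplecticAdjoint_one,
      symplecticAdjoint_embed_root hγ, symplecticAdjoint_embed_nilp hγ,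
      symplecticAdjoint_embed_root_mul_nilp hγ, smul_neg, sub_eq_add_neg]
  rw [hadj, ← map_mul, adjoint_ofCoeffs_mul_ofCoeffs hγ.2.1.ne_zero]

end Similitude

section CyclicVector

variable {hq} (hns : ¬IsSquare m)
include hns

lemma eq_zero_of_embed_linear_mulVec_eq_zero {u : Fin 4 → k} (hu : u ≠ 0)
    (hnu : embed hq (nilp m) *ᵥ u = 0) {a b : k} (h : embed hq (a • 1 + b • t) *ᵥ u = 0) :
    a = 0 ∧ b = 0 := by
  have hnorm : (a ^ 2 - m * b ^ 2) • u = 0 := by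
    have := congrArg (embed hq (a • 1 - b • t) *ᵥ ·) h
    rwa [mulVec_zero, ← embed_mul_mulVec, one_sub_root_mul_one_add_root, map_sub, map_smul,
      map_smul, map_one, sub_mulVec, smul_mulVec, smul_mulVec, one_mulVec, hnu, smul_zero,
      sub_zero] at this
  have hab : a ^ 2 = m * b ^ 2 := sub_eq_zero.mp ((smul_eq_zero.mp hnorm).resolve_right hu)
  have hb : b = 0 := by
    by_contra hb
    exact hns ⟨a / b, by field_simp; linear_combination -hab⟩
  subst hb
  exact ⟨pow_eq_zero_iff two_ne_zero |>.mp (by simpa using hab), rfl⟩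

variable {v : Fin 4 → k} (hv : embed hq (nilp m) *ᵥ v ≠ 0)
include hv

lemma eq_zero_of_embed_ofCoeffs_mulVec_eq_zero {a b c d : k}
    (h : embed hq (ofCoeffs m a b c d) *ᵥ v = 0) : a = 0 ∧ b = 0 ∧ c = 0 ∧ d = 0 := by
  have hnnv : embed hq (nilp m) *ᵥ (embed hq (nilp m) *ᵥ v) = 0 := by
    rw [← embed_mul_mulVec, ← pow_two, nilp_sq, map_zero, zero_mulVec]
  obtain ⟨rfl, rfl⟩ : a = 0 ∧ b = 0 := by
    refine eq_zero_of_embed_linear_mulVec_eq_zero hns hv hnnv ?_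
    rw [← embed_mul_mulVec, ← nilp_mul_ofCoeffs m a b c d, embed_mul_mulVec, h, mulVec_zero]
  obtain ⟨rfl, rfl⟩ : c = 0 ∧ d = 0 := by
    refine eq_zero_of_embed_linear_mulVec_eq_zero hns hv hnnv ?_
    rwa [← embed_mul_mulVec, ← ofCoeffs_zero_zero]
  exact ⟨rfl, rfl, rfl, rfl⟩

lemma linearIndependent_embed_mulVec :
    LinearIndependent k fun i => embed hq (![1, t, nilp m, t * nilp m] i) *ᵥ v := by
  rw [Fintype.linearIndependent_iff]
  intro g hg
  have h : embed hq (ofCoeffs m (g 0) (g 1) (g 2) (g 3)) *ᵥ v = 0 := by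
    rw [embed_ofCoeffs_mulVec, ← hg]
    congr 1; ext1 i; fin_cases i <;> rfl
  obtain ⟨h0, h1, h2, h3⟩ := eq_zero_of_embed_ofCoeffs_mulVec_eq_zero hns hv h
  intro i
  fin_cases i <;> assumption

lemma exists_embed_ofCoeffs_mulVec_eq (w : Fin 4 → k) :
    ∃ a b c d, embed hq (ofCoeffs m a b c d) *ᵥ v = w := by
  have hspan := (linearIndependent_embed_mulVec hns hv).span_eq_top_of_card_eq_finrank' (by simp)
  obtain ⟨g, hg⟩ := (Submodule.top_le_span_range_iff_forall_exists_fun k).mp hspan.ge w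
  refine ⟨g 0, g 1, g 2, g 3, ?_⟩
  rw [embed_ofCoeffs_mulVec, ← hg]
  congr 1; ext1 i; fin_cases i <;> rfl

lemma eq_of_embed_ofCoeffs_eq {a b c d a' b' c' d' : k}
    (h : embed hq (ofCoeffs m a b c d) = embed hq (ofCoeffs m a' b' c' d')) :
    a = a' ∧ b = b' ∧ c = c' ∧ d = d' := by
  have := eq_zero_of_embed_ofCoeffs_mulVec_eq_zero hns hv (a := a - a') (b := b - b')
    (c := c - c') (d := d - d') (by rw [← ofCoeffs_sub_ofCoeffs, map_sub, h, sub_self, zero_mulVec])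
  simpa only [sub_eq_zero] using this

lemma exists_eq_embed_ofCoeffs_of_commute {δ : Matrix (Fin 4) (Fin 4) k} (hδ : δ * γ = γ * δ) :
    ∃ a b c d, δ = embed hq (ofCoeffs m a b c d) := by
  obtain ⟨a, b, c, d, hδv⟩ := exists_embed_ofCoeffs_mulVec_eq hns hv (δ *ᵥ v)
  refine ⟨a, b, c, d, sub_eq_zero.mp (ext_iff_mulVec.mpr fun w => ?_)⟩
  have hcomm : Commute (δ - embed hq (ofCoeffs m a b c d)) γ :=
    Commute.sub_left hδ (embed_mul_comm hq _)
  obtain ⟨a', b', c', d', rfl⟩ := exists_embed_ofCoeffs_mulVec_eq hns hv w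
  rw [mulVec_mulVec, (commute_embed hq hcomm _).eq, ← mulVec_mulVec, sub_mulVec, hδv, sub_self,
    mulVec_zero, zero_mulVec]

lemma exists_inGSp4_embed_ofCoeffs_iff (hγ : InGSp4 m γ) (a b c d : k) :
    (∃ μ, InGSp4 μ (embed hq (ofCoeffs m a b c d))) ↔ a * b = 0 ∧ (a, b) ≠ 0 := by
  have hm : m ≠ 0 := hγ.2.1.ne_zero
  have hscalar (μ : k) : μ • (1 : Matrix (Fin 4) (Fin 4) k) = embed hq (ofCoeffs m μ 0 0 0) := by
    simp [ofCoeffs]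
  simp only [exists_inGSp4_iff, symplecticAdjoint_embed_ofCoeffs_mul_self hγ, hscalar]
  constructor
  · rintro ⟨μ, hμ, h⟩
    obtain ⟨rfl, -, -, hab⟩ := eq_of_embed_ofCoeffs_eq hns hv h
    have hab : a * b = 0 := by simpa [hm] using hab
    refine ⟨hab, fun h0 => hμ ?_⟩
    simp only [Prod.mk_eq_zero] at h0
    simp [h0.1, h0.2]
  · rintro ⟨hab, hne⟩
    refine ⟨a ^ 2 + m * b ^ 2, ?_, ?_⟩
    · rcases mul_eq_zero.mp hab with rfl | rfl
      · simpa [hm] using hne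
      · simpa using hne
    · rw [mul_assoc, hab, mul_zero, zero_mul, neg_zero]

lemma setOf_inGSp4_commute_eq_image (hγ : InGSp4 m γ) :
    {δ | (∃ μ, InGSp4 μ δ) ∧ δ * γ = γ * δ}
      = (fun x : (k × k) × (k × k) => embed hq (ofCoeffs m x.1.1 x.1.2 x.2.1 x.2.2)) ''
          ({p : k × k | p.1 * p.2 = 0 ∧ p ≠ 0} ×ˢ Set.univ) := by
  ext δ
  constructor
  · rintro ⟨hδ, hcomm⟩
    obtain ⟨a, b, c, d, rfl⟩ := exists_eq_embed_ofCoeffs_of_commute hns hv hcomm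
    exact ⟨((a, b), (c, d)),
      ⟨(exists_inGSp4_embed_ofCoeffs_iff hns hv hγ a b c d).mp hδ, trivial⟩, rfl⟩
  · rintro ⟨⟨⟨a, b⟩, c, d⟩, ⟨hab, -⟩, rfl⟩
    exact ⟨(exists_inGSp4_embed_ofCoeffs_iff hns hv hγ a b c d).mpr hab, embed_mul_comm hq _⟩

end CyclicVector

end GSp4Centralizer

lemma ncard_setOf_mul_eq_zero_and_ne_zero {M : Type*} [MulZeroClass M] [NoZeroDivisors M]
    [Finite M] : {p : M × M | p.1 * p.2 = 0 ∧ p ≠ 0}.ncard = 2 * (Nat.card M - 1) := by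
  have hsplit : {p : M × M | p.1 * p.2 = 0 ∧ p ≠ 0} = ({0}ᶜ ×ˢ {0}) ∪ ({0} ×ˢ {0}ᶜ) := by
    ext ⟨a, b⟩
    simp only [Set.mem_ofPred_eq, mul_eq_zero, ne_eq, Prod.mk_eq_zero, Set.mem_union,
      Set.mem_prod, Set.mem_compl_iff, Set.mem_singleton_iff]
    tauto
  have hdisj : Disjoint ({0}ᶜ ×ˢ {0} : Set (M × M)) ({0} ×ˢ {0}ᶜ) :=
    Set.disjoint_left.mpr fun p hp hp' => hp.1 hp'.1
  rw [hsplit, Set.ncard_union_eq hdisj, Set.ncard_prod, Set.ncard_prod, Set.ncard_compl,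
    Set.ncard_singleton]
  ring

open GSp4Centralizer in
theorem centOrder_eq_of_not_isSquare {k : Type*} [Field k] [Finite k] {m : k}
    (hns : ¬IsSquare m) {γ : Matrix (Fin 4) (Fin 4) k} (hγ : InGSp4 m γ)
    (hq : aeval γ ((X ^ 2 - C m) ^ 2) = 0) (hN : aeval γ (X ^ 2 - C m) ≠ 0) :
    centOrder γ = 2 * Nat.card k ^ 2 * (Nat.card k - 1) := by
  obtain ⟨v, hv⟩ : ∃ v, embed hq (nilp m) *ᵥ v ≠ 0 := by
    by_contra! h
    exact hN (by rw [← embed_nilp hq]; exact ext_iff_mulVec.mpr fun v => by simp [h v])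
  have hinj : Function.Injective fun x : (k × k) × (k × k) =>
      embed hq (ofCoeffs m x.1.1 x.1.2 x.2.1 x.2.2) := by
    rintro ⟨⟨a, b⟩, c, d⟩ ⟨⟨a', b'⟩, c', d'⟩ h
    obtain ⟨rfl, rfl, rfl, rfl⟩ := eq_of_embed_ofCoeffs_eq hns hv h
    rfl
  rw [centOrder, ← Set.coe_ofPred, Nat.card_coe_set_eq, setOf_inGSp4_commute_eq_image hns hv hγ,
    Set.ncard_image_of_injective _ hinj, Set.ncard_prod, ncard_setOf_mul_eq_zero_and_ne_zero,
    Set.ncard_univ, Nat.card_prod]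
  ring

lemma aeval_ne_zero_of_minpoly_eq_sq {k A : Type*} [Field k] [Ring A] [Algebra k A] {x : A}
    {p : k[X]} (hp : 0 < p.natDegree) (h : minpoly k x = p ^ 2) : aeval x p ≠ 0 := by
  intro hx
  have hle := natDegree_le_natDegree
    (minpoly.degree_le_of_ne_zero k x (ne_zero_of_natDegree_gt hp) hx)
  rw [h, natDegree_pow] at hle
  omega

theorem stmt8_general (ℓ : ℕ) [Fact ℓ.Prime]
    (m : ZMod ℓ) (hns : ¬ IsSquare m)
    (γ : Matrix (Fin 4) (Fin 4) (ZMod ℓ)) (hγ : InGSp4 m γ)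
    (hcyc : IsCyclicMat γ)
    (hchar : γ.charpoly = (X ^ 2 - C m) ^ 2) :
    centOrder γ = 2 * ℓ ^ 2 * (ℓ - 1) := by
  have hq : aeval γ ((X ^ 2 - C m) ^ 2) = 0 := hchar ▸ γ.aeval_self_charpoly
  have hN : aeval γ (X ^ 2 - C m) ≠ 0 :=
    aeval_ne_zero_of_minpoly_eq_sq (by rw [natDegree_X_pow_sub_C]; norm_num) (hcyc.trans hchar)
  rw [centOrder_eq_of_not_isSquare hns hγ hq hN, Nat.card_zmod]

theorem stmt8 (ℓ : ℕ) (hℓ : ℓ.Prime) (hodd : ℓ ≠ 2) [Fact ℓ.Prime]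
    (m : ZMod ℓ) (hm : m ≠ 0) (hns : ¬ IsSquare m)
    (γ : Matrix (Fin 4) (Fin 4) (ZMod ℓ)) (hγ : InGSp4 m γ)
    (hcyc : IsCyclicMat γ)
    (hchar : γ.charpoly = (X ^ 2 - C m) ^ 2) :
    centOrder γ = 2 * ℓ ^ 2 * (ℓ - 1) :=
  stmt8_general ℓ m hns γ hγ hcyc hchar
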